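/- For c > 0 and μ ∈ ℝ, define U_μ = [[sinh(μ/2), cosh(μ/2)·coth(c/2)], [−cosh(μ/2)·tanh(c/2), −sinh(μ/2)]] and S₁ = [[cosh c, cosh c + 1], [cosh c − 1, cosh c]]. Then det U_μ = 1 and U_μ · S₁ · U_μ⁻¹ = S₁⁻¹. -/

import Mathlib

/-!
Both matrices have a special shape: `U = !![x, y; z, -x]` and `S₁ = !![a, b; c, a]` with
`a² - b c = 1`, so `S₁⁻¹ = adjugate S₁`. For matrices of these shapes the relation
`U S₁ = (adjugate S₁) U` reduces to the single scalar identity `b z + c y = 0`, which here is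
`(cosh c + 1) tanh (c/2) = (cosh c - 1) coth (c/2)`: by the half-angle formulas both sides
equal `sinh c`.
-/

open Real

noncomputable def cothR (x : ℝ) : ℝ := Real.cosh x / Real.sinh x

theorem Matrix.inv_eq_adjugate_of_det_eq_one {n R : Type*} [Fintype n] [DecidableEq n]
    [CommRing R] {A : Matrix n n R} (h : A.det = 1) : A⁻¹ = A.adjugate := by
  rw [inv_def, h, Ring.inverse_one, one_smul]

theorem Matrix.traceless_mul_eq_adjugate_mul {R : Type*} [CommRing R] {a b c x y z : R}
    (h : b * z + c * y = 0) :
    !![x, y; z, -x] * !![a, b; c, a] = adjugate !![a, b; c, a] * !![x, y; z, -x] := by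
  rw [adjugate_fin_two_of]
  ext i j
  fin_cases i <;> fin_cases j <;> simp [Matrix.mul_apply] <;> grind

theorem cosh_add_one_mul_tanh_half (x : ℝ) : (cosh x + 1) * tanh (x / 2) = sinh x := by
  have hx : x = 2 * (x / 2) := by ring
  rw [tanh_eq_sinh_div_cosh, hx, cosh_two_mul, sinh_two_mul, ← hx]
  have := cosh_pos (x / 2)
  field_simp
  linear_combination (-sinh (x / 2)) * cosh_sq_sub_sinh_sq (x / 2)

-- Also true at `x = 0`, where `cothR 0 = 0 / 0 = 0`.
theorem cosh_sub_one_mul_cothR_half (x : ℝ) : (cosh x - 1) * cothR (x / 2) = sinh x := by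
  have hx : x = 2 * (x / 2) := by ring
  rw [cothR, hx, cosh_two_mul, sinh_two_mul, ← hx, cosh_sq]
  rcases eq_or_ne (sinh (x / 2)) 0 with h | h
  · simp [h]
  field_simp
  ring

theorem cothR_mul_tanh {x : ℝ} (hx : x ≠ 0) : cothR x * tanh x = 1 := by
  rw [cothR, tanh_eq_sinh_div_cosh]
  have := cosh_pos x
  have : sinh x ≠ 0 := by simpa using hx
  field_simp

theorem stmt13 (c μ : ℝ) (hc : 0 < c) :
    let U : Matrix (Fin 2) (Fin 2) ℝ :=
      !![Real.sinh (μ / 2), Real.cosh (μ / 2) * cothR (c / 2);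
         -(Real.cosh (μ / 2) * Real.tanh (c / 2)), -Real.sinh (μ / 2)]
    let S₁ : Matrix (Fin 2) (Fin 2) ℝ :=
      !![Real.cosh c, Real.cosh c + 1; Real.cosh c - 1, Real.cosh c]
    U.det = 1 ∧ U * S₁ * U⁻¹ = S₁⁻¹ := by
  intro U S₁
  have hU : U.det = 1 := by
    rw [Matrix.det_fin_two_of]
    linear_combination cosh (μ / 2) ^ 2 * cothR_mul_tanh (by positivity : c / 2 ≠ 0)
      + cosh_sq_sub_sinh_sq (μ / 2)
  have hS : S₁.det = 1 := by
    rw [Matrix.det_fin_two_of]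
    ring
  have hcomm : U * S₁ = S₁.adjugate * U :=
    Matrix.traceless_mul_eq_adjugate_mul <| by
      linear_combination cosh (μ / 2) *
        (cosh_sub_one_mul_cothR_half c - cosh_add_one_mul_tanh_half c)
  refine ⟨hU, ?_⟩
  rw [hcomm, Matrix.mul_nonsing_inv_cancel_right _ _ (by simp [hU]),
    Matrix.inv_eq_adjugate_of_det_eq_one hS]
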